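/- arXiv:hep-th/9306102 — 3 statements merged into one kernel-verified Lean document; each statement's English description precedes it below -/
import Mathlib

section
/- Suppose a Lax matrix L (an n×n matrix of functions on a Poisson manifold) satisfies {L ⊗ 1, 1 ⊗ L} = [R_{12}, L ⊗ 1] - [R_{21}, 1 ⊗ L] for some matrix R_{12} ∈ M_n ⊗ M_n of functions. Then the functions I_k = Tr(L^k) are in involution: {I_k, I_m} = 0 for all k, m ≥ 1. -/
/-!
The bracket `{Tr L^k, Tr L^m}` is, by the Leibniz rule in both arguments,
`k m Tr₁₂ (L₁^(k-1) L₂^(m-1) {L₁, L₂})`. Substituting the R-matrix form of `{L₁, L₂}`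
leaves traces of `L₁^(k-1) L₂^(m-1)` against the commutators `[R₁₂, L₁]` and `[R₂₁, L₂]`,
and these vanish by cyclicity of the trace, since `L₁^(k-1) L₂^(m-1)` commutes with both
`L₁` and `L₂`.
-/

open Kronecker

section

open Matrix Finset

variable {A ι : Type*} [CommRing A]

namespace Derivation

variable {R : Type*} [CommRing R] [Algebra R A]

theorem map_matrix_mul {l m o : Type*} [Fintype m] (D : Derivation R A A)
    (M : Matrix l m A) (N : Matrix m o A) :
    (M * N).map D = M.map D * N + M * N.map D := by
  ext i j
  simp only [Matrix.add_apply, map_apply, mul_apply, map_sum, leibniz, smul_eq_mul,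
    ← sum_add_distrib]
  exact sum_congr rfl fun _ _ => by ring

variable [Fintype ι] [DecidableEq ι]

theorem map_matrix_pow_succ (D : Derivation R A A) (L : Matrix ι ι A) (m : ℕ) :
    (L ^ (m + 1)).map D = ∑ p ∈ antidiagonal m, L ^ p.1 * L.map D * L ^ p.2 := by
  induction m with
  | zero => simp
  | succ m ih =>
    rw [pow_succ, map_matrix_mul, ih, Finset.Nat.sum_antidiagonal_succ', sum_mul]
    simp only [pow_zero, mul_one, pow_succ, mul_assoc, add_comm]

theorem apply_trace_pow_succ (D : Derivation R A A) (L : Matrix ι ι A) (m : ℕ) :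
    D (L ^ (m + 1)).trace = (m + 1) • (L ^ m * L.map D).trace := by
  have cyclic : ∀ p ∈ antidiagonal m,
      (L ^ p.1 * L.map D * L ^ p.2).trace = (L ^ m * L.map D).trace := by
    intro p hp
    rw [trace_mul_cycle, ← pow_add, add_comm, mem_antidiagonal.mp hp]
  rw [AddMonoidHom.map_trace, map_matrix_pow_succ, trace_sum, sum_congr rfl cyclic,
    sum_const, Finset.Nat.card_antidiagonal]

def ofBracket (P : A → A → A) (hadd : ∀ a b c, P a (b + c) = P a b + P a c)
    (hleib : ∀ a b c, P a (b * c) = P a b * c + b * P a c) (a : A) : Derivation ℤ A A :=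
  mk' (AddMonoidHom.mk' (P a) (hadd a)).toIntLinearMap fun b c => by
    simp [hleib, mul_comm, add_comm]

end Derivation

theorem Commute.kronecker {κ : Type*} [Fintype ι] [Fintype κ] {M X : Matrix ι ι A}
    {N Y : Matrix κ κ A} (h : Commute M X) (h' : Commute N Y) : Commute (M ⊗ₖ N) (X ⊗ₖ Y) := by
  rw [Commute, SemiconjBy, ← mul_kronecker_mul, ← mul_kronecker_mul, h.eq, h'.eq]

theorem Matrix.trace_mul_commutator_eq_zero [Fintype ι] {M X : Matrix ι ι A}
    (h : Commute M X) (N : Matrix ι ι A) : (M * (N * X - X * N)).trace = 0 := by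
  rw [mul_sub, trace_sub, sub_eq_zero, ← mul_assoc, ← mul_assoc, h.eq, trace_mul_cycle]

/-- The matrix `{L₁, L₂}`: its entry at `((i, k), (j, l))` is `P (L i j) (L k l)`. -/
def bracketMatrix (P : A → A → A) (L : Matrix ι ι A) : Matrix (ι × ι) (ι × ι) A :=
  of fun x y => P (L x.1 y.1) (L x.2 y.2)

theorem bracket_trace_pow_succ [Fintype ι] [DecidableEq ι] (P : A → A → A)
    (hadd : ∀ a b c, P a (b + c) = P a b + P a c)
    (hleib : ∀ a b c, P a (b * c) = P a b * c + b * P a c) (hskew : ∀ a b, P a b = -P b a)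
    (L : Matrix ι ι A) (k m : ℕ) :
    P (L ^ (k + 1)).trace (L ^ (m + 1)).trace
      = ((k + 1) * (m + 1)) • (((L ^ k) ⊗ₖ (L ^ m)) * bracketMatrix P L).trace := by
  have right (a : A) : P a (L ^ (m + 1)).trace = (m + 1) • (L ^ m * L.map (P a)).trace :=
    (Derivation.ofBracket P hadd hleib a).apply_trace_pow_succ L m
  have left (b : A) :
      P (L ^ (k + 1)).trace b = (k + 1) • (L ^ k * L.map (P · b)).trace := by
    have hD : ⇑(-Derivation.ofBracket P hadd hleib b) = (P · b) :=
      funext fun x => by rw [hskew x b]; rfl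
    have h := (-Derivation.ofBracket P hadd hleib b).apply_trace_pow_succ L k
    rwa [hD] at h
  have inner : L.map (P · (L ^ (m + 1)).trace)
      = (m + 1) • of fun j i => (L ^ m * L.map (P (L j i))).trace := by
    ext j i
    exact right (L j i)
  rw [left, inner, mul_smul_comm, trace_smul, smul_smul]
  congr 1
  simp only [trace, Matrix.diag, mul_apply, map_apply, kroneckerMap_apply, bracketMatrix,
    of_apply, Fintype.sum_prod_type, mul_sum]
  exact sum_congr rfl fun _ _ => by rw [sum_comm]; simp only [mul_assoc]

end

theorem traces_in_involution_of_R_matrix_general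
    {A : Type*} [CommRing A] {n : ℕ}
    (P : A → A → A)
    (Padd_right : ∀ a b c : A, P a (b + c) = P a b + P a c)
    (Pskew : ∀ a b : A, P a b = - P b a)
    (Pleibniz : ∀ a b c : A, P a (b * c) = P a b * c + b * P a c)
    (L : Matrix (Fin n) (Fin n) A)
    (R12 : Matrix (Fin n × Fin n) (Fin n × Fin n) A)
    -- `R₂₁` is `R₁₂` with the two tensor factors swapped:
    (R21 : Matrix (Fin n × Fin n) (Fin n × Fin n) A)
    -- the R-matrix form of the Poisson brackets of the Lax matrix entries:
    (hLax : ∀ i j k l : Fin n,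
      P (L i j) (L k l) =
        (R12 * (L ⊗ₖ (1 : Matrix (Fin n) (Fin n) A))
          - (L ⊗ₖ (1 : Matrix (Fin n) (Fin n) A)) * R12
          - (R21 * ((1 : Matrix (Fin n) (Fin n) A) ⊗ₖ L)
            - ((1 : Matrix (Fin n) (Fin n) A) ⊗ₖ L) * R21)) (i, k) (j, l)) :
    ∀ k m : ℕ, 1 ≤ k → 1 ≤ m → P (L ^ k).trace (L ^ m).trace = 0 := by
  intro k m hk hm
  obtain ⟨k, rfl⟩ := Nat.exists_eq_add_of_le' hk
  obtain ⟨m, rfl⟩ := Nat.exists_eq_add_of_le' hm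
  have hbracket : bracketMatrix P L
      = R12 * (L ⊗ₖ 1) - (L ⊗ₖ 1) * R12 - (R21 * (1 ⊗ₖ L) - (1 ⊗ₖ L) * R21) := by
    ext ⟨i, k⟩ ⟨j, l⟩
    exact hLax i j k l
  have hL₁ : Commute ((L ^ k) ⊗ₖ (L ^ m)) (L ⊗ₖ 1) :=
    (Commute.pow_self L k).kronecker (Commute.one_right _)
  have hL₂ : Commute ((L ^ k) ⊗ₖ (L ^ m)) (1 ⊗ₖ L) :=
    (Commute.one_right _).kronecker (Commute.pow_self L m)
  rw [bracket_trace_pow_succ P Padd_right Pleibniz Pskew, hbracket, mul_sub, Matrix.trace_sub,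
    Matrix.trace_mul_commutator_eq_zero hL₁, Matrix.trace_mul_commutator_eq_zero hL₂, sub_zero, smul_zero]

/-- If a Lax matrix `L` of functions satisfies
`{L₁, L₂} = [R₁₂, L₁] - [R₂₁, L₂]` for some `R₁₂ ∈ Mₙ ⊗ Mₙ` of functions,
then the traces `I_k = Tr(L^k)` are in involution.  Here the algebra `A` of
functions on the Poisson manifold carries a Poisson bracket `P` (biadditive,
antisymmetric, Leibniz). -/
theorem traces_in_involution_of_R_matrix
    {A : Type*} [CommRing A] {n : ℕ}
    (P : A → A → A)
    (Padd_left : ∀ a b c : A, P (a + b) c = P a c + P b c)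
    (Padd_right : ∀ a b c : A, P a (b + c) = P a b + P a c)
    (Pskew : ∀ a b : A, P a b = - P b a)
    (Pleibniz : ∀ a b c : A, P a (b * c) = P a b * c + b * P a c)
    (L : Matrix (Fin n) (Fin n) A)
    (R12 : Matrix (Fin n × Fin n) (Fin n × Fin n) A)
    -- `R₂₁` is `R₁₂` with the two tensor factors swapped:
    (R21 : Matrix (Fin n × Fin n) (Fin n × Fin n) A)
    (hR21 : ∀ i j k l : Fin n, R21 (i, k) (j, l) = R12 (k, i) (l, j))
    -- the R-matrix form of the Poisson brackets of the Lax matrix entries: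
    (hLax : ∀ i j k l : Fin n,
      P (L i j) (L k l) =
        (R12 * (L ⊗ₖ (1 : Matrix (Fin n) (Fin n) A))
          - (L ⊗ₖ (1 : Matrix (Fin n) (Fin n) A)) * R12
          - (R21 * ((1 : Matrix (Fin n) (Fin n) A) ⊗ₖ L)
            - ((1 : Matrix (Fin n) (Fin n) A) ⊗ₖ L) * R21)) (i, k) (j, l)) :
    ∀ k m : ℕ, 1 ≤ k → 1 ≤ m → P (L ^ k).trace (L ^ m).trace = 0 :=
  traces_in_involution_of_R_matrix_general P Padd_right Pskew Pleibniz L R12 R21 hLax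
end

section
/- Let σ be an involutive automorphism of g with g = h ⊕ k, a ⊂ k abelian with σ|_a = -id, q ∈ a, Q = exp(q), and e_α a root vector for α ∈ a*. Let L = p + Σ_α l_α (e_α - σ(e_α)) with p ∈ a. Then the projection of Q L Q^{-1} onto h (along k) equals Σ_α l_α sinh(α(q)) (e_α + σ(e_α)). Consequently, if this projection is required to equal Σ_α g_α (e_α + σ(e_α)), then l_α = g_α / sinh(α(q)), yielding the Calogero-Moser Lax matrix L = p + Σ_α (g_α / sinh α(q)) (e_α - σ(e_α)). -/
/-!
Conjugation by `Q` scales `e_α` by `e^{α(q)}` and `σ(e_α)` by `e^{-α(q)}`, so it sends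
`e_α - σ(e_α)` to `sinh(α(q)) (e_α + σ(e_α)) + cosh(α(q)) (e_α - σ(e_α))`, whose first term
lies in `h` and second in `k`; `p` is fixed and lies in `k`. Since the `e_α + σ(e_α)` are
linearly independent, the projection determines the `l_α`, and `sinh(α(q)) ≠ 0` lets us divide.
-/

open Finset

section

variable {M : Type*} [AddCommGroup M] [Module ℝ M]

theorem Real.exp_smul_sub_exp_neg_smul (t : ℝ) (x y : M) :
    Real.exp t • x - Real.exp (-t) • y =
      Real.sinh t • (x + y) + Real.cosh t • (x - y) := by
  rw [Real.sinh_eq, Real.cosh_eq]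
  module

theorem LinearMap.map_exp_smul_sub_exp_neg_smul (π : M →ₗ[ℝ] M) {x y : M}
    (hπ_add : π (x + y) = x + y) (hπ_sub : π (x - y) = 0) (t : ℝ) :
    π (Real.exp t • x - Real.exp (-t) • y) = Real.sinh t • (x + y) := by
  rw [Real.exp_smul_sub_exp_neg_smul, map_add, map_smul, map_smul, hπ_add, hπ_sub, smul_zero,
    add_zero]

theorem LinearMap.map_map_add_sum_smul_sub {ι : Type*} [Fintype ι] (π f : M →ₗ[ℝ] M)
    (p : M) (u v : ι → M) (c l : ι → ℝ)
    (hfp : f p = p) (hfu : ∀ i, f (u i) = Real.exp (c i) • u i)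
    (hfv : ∀ i, f (v i) = Real.exp (-(c i)) • v i)
    (hπp : π p = 0) (hπ_add : ∀ i, π (u i + v i) = u i + v i)
    (hπ_sub : ∀ i, π (u i - v i) = 0) :
    π (f (p + ∑ i, l i • (u i - v i))) = ∑ i, (l i * Real.sinh (c i)) • (u i + v i) := by
  rw [map_add, hfp, map_add, hπp, zero_add, map_sum, map_sum]
  refine sum_congr rfl fun i _ => ?_
  rw [map_smul, map_sub, hfu, hfv, map_smul,
    π.map_exp_smul_sub_exp_neg_smul (hπ_add i) (hπ_sub i), smul_smul]

end

theorem LinearIndependent.sum_smul_eq_sum_smul_iff {R M ι : Type*} [Semiring R]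
    [AddCommMonoid M] [Module R M] [Fintype ι] {v : ι → M} (hv : LinearIndependent R v)
    {a b : ι → R} : ∑ i, a i • v i = ∑ i, b i • v i ↔ ∀ i, a i = b i := by
  rw [← funext_iff]
  exact (linearIndependent_iff_injective_fintypeLinearCombination.mp hv).eq_iff

/-- For the symmetric-space (Calogero) situation: `σ` an involution
with eigenspace decomposition `g = h ⊕ k`, `Q = exp q` conjugating the root
vectors by `Q e_α Q⁻¹ = e^{α(q)} e_α`, `Q σ(e_α) Q⁻¹ = e^{-α(q)} σ(e_α)`, and
`L = p + Σ_α l_α (e_α - σ(e_α))` with `p ∈ a`.  Then the projection of `Q L Q⁻¹`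
onto `h` (along `k`) equals `Σ_α l_α sinh(α(q)) (e_α + σ(e_α))`; consequently,
that projection equals `Σ_α g_α (e_α + σ(e_α))` iff `l_α = g_α / sinh(α(q))`,
giving the Calogero-Moser Lax matrix. -/
theorem calogero_projection_and_lax
    {A ι : Type*} [Ring A] [Algebra ℝ A] [Fintype ι]
    (σ : A →ₗ[ℝ] A)
    (Q : Aˣ) (p : A) (e : ι → A) (c l gc : ι → ℝ)
    (hc : ∀ i, c i ≠ 0)
    (hQp : (Q : A) * p * (↑Q⁻¹ : A) = p)
    (hQe : ∀ i, (Q : A) * e i * (↑Q⁻¹ : A) = Real.exp (c i) • e i)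
    (hQσe : ∀ i, (Q : A) * σ (e i) * (↑Q⁻¹ : A) = Real.exp (-(c i)) • σ (e i))
    -- `π` is the projection onto `h` along `k`:
    (π : A →ₗ[ℝ] A)
    (hπp : π p = 0)
    (hπh : ∀ i, π (e i + σ (e i)) = e i + σ (e i))
    (hπk : ∀ i, π (e i - σ (e i)) = 0)
    (hind : LinearIndependent ℝ (fun i => e i + σ (e i)))
    (L : A)
    (hL : L = p + ∑ i, l i • (e i - σ (e i))) :
    π ((Q : A) * L * (↑Q⁻¹ : A)) =
      ∑ i, (l i * Real.sinh (c i)) • (e i + σ (e i)) ∧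
    (π ((Q : A) * L * (↑Q⁻¹ : A)) = ∑ i, gc i • (e i + σ (e i)) ↔
      ∀ i, l i = gc i / Real.sinh (c i)) := by
  have hproj : π ((Q : A) * L * (↑Q⁻¹ : A)) =
      ∑ i, (l i * Real.sinh (c i)) • (e i + σ (e i)) := by
    rw [hL]
    exact π.map_map_add_sum_smul_sub (LinearMap.mulLeftRight ℝ ((Q : A), (↑Q⁻¹ : A))) p e
      (fun i => σ (e i)) c l hQp hQe hQσe hπp hπh hπk
  refine ⟨hproj, ?_⟩
  rw [hproj, hind.sum_smul_eq_sum_smul_iff]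
  exact forall_congr' fun i => (eq_div_iff (Real.sinh_ne_zero.mpr (hc i))).symm
end

section
/- Let v ∈ ℂ^n be the vector with all components equal to 1 and let h_μ = {M ∈ su(n) : M v = iθ v for some θ ∈ ℝ}, b = {purely imaginary traceless diagonal matrices}, and c = {M antihermitian : M_{jk} = u_j - u_k with u_j ∈ ℝ, Σ u_j = 0}. Then su(n) = h_μ ⊕ b ⊕ c as a direct sum of real vector spaces, and c is the orthogonal complement of h_μ ⊕ b in su(n) with respect to the Killing form (X,Y) ↦ Tr(XY). -/
/-!
Everything is read off from the row sums `r = M *ᵥ 1`. If `M = H + B + C` with `H *ᵥ 1 = iθ • 1`,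
`B = diagonal (i d)` and `C j k = u j - u k` (`∑ d = ∑ u = 0`), then `r j = n u j + i (θ + d j)`.
Hence `u = Re r / n`, `θ` is the mean of `Im r` and `d = Im r - θ`: these formulas give both
existence and uniqueness of the decomposition.

A matrix of `c` has zero diagonal, so it is orthogonal to `b`; it is orthogonal to `h_μ` because an
antihermitian `H` with constant row sums `iθ` also has constant column sums `iθ`. Conversely, if
`M ∈ su(n)` is orthogonal to `h_μ ⊕ b`, its component `X` in `h_μ ⊕ b` satisfies `Tr(X X) = 0`,
and `Tr(X X) = -Tr(Xᴴ X)` vanishes only at `X = 0`.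
-/

open Matrix Complex
open scoped ComplexOrder

namespace Matrix

theorem trace_mul_self_eq_zero_iff_of_conjTranspose_eq_neg {m R : Type*} [Fintype m]
    [PartialOrder R] [Ring R] [StarRing R] [StarOrderedRing R] [NoZeroDivisors R]
    {X : Matrix m m R} (hX : Xᴴ = -X) : (X * X).trace = 0 ↔ X = 0 := by
  rw [← trace_conjTranspose_mul_self_eq_zero_iff, hX, neg_mul, trace_neg, neg_eq_zero]

variable {ι : Type*} [Fintype ι]

theorem one_vecMul_eq_neg_star_mulVec_one {A : Matrix ι ι ℂ} (hA : Aᴴ = -A) :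
    1 ᵥ* A = -star (A *ᵥ 1) := by
  rw [star_mulVec, hA, star_one, vecMul_neg, neg_neg]

theorem sum_one_vecMul (A : Matrix ι ι ℂ) : ∑ j, (1 ᵥ* A) j = ∑ j, (A *ᵥ 1) j := by
  rw [← dotProduct_one, ← one_dotProduct, dotProduct_mulVec]

theorem sum_re_mulVec_one_eq_zero {A : Matrix ι ι ℂ} (hA : Aᴴ = -A) :
    ∑ j, ((A *ᵥ 1) j).re = 0 := by
  have h := congrArg Complex.re (sum_one_vecMul A)
  simp only [one_vecMul_eq_neg_star_mulVec_one hA, re_sum, Pi.neg_apply, Pi.star_apply, neg_re,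
    star_def, conj_re, Finset.sum_neg_distrib] at h
  linarith

end Matrix

namespace SuDecomposition

variable {ι : Type*}

def diffMatrix (u : ι → ℝ) : Matrix ι ι ℂ := of fun j k => (u j : ℂ) - u k

theorem diffMatrix_conjTranspose (u : ι → ℝ) : (diffMatrix u)ᴴ = -diffMatrix u := by
  ext j k
  simp [diffMatrix]

variable [Fintype ι]

theorem trace_diffMatrix (u : ι → ℝ) : (diffMatrix u).trace = 0 := by
  simp [diffMatrix, trace]

theorem diffMatrix_mulVec_one {u : ι → ℝ} (hu : ∑ j, u j = 0) :
    diffMatrix u *ᵥ 1 = fun j => (Fintype.card ι : ℂ) * u j := by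
  ext j
  simp [diffMatrix, mulVec, dotProduct, Finset.sum_sub_distrib, ← ofReal_sum, hu]

theorem trace_diffMatrix_mul (u : ι → ℝ) (A : Matrix ι ι ℂ) :
    (diffMatrix u * A).trace =
      (fun j => (u j : ℂ)) ⬝ᵥ (1 ᵥ* A) - (fun j => (u j : ℂ)) ⬝ᵥ (A *ᵥ 1) := by
  simp only [trace, diffMatrix, diag_apply, mul_apply, of_apply, sub_mul, Finset.sum_sub_distrib,
    dotProduct, vecMul, Pi.one_apply, one_mul, Finset.mul_sum, mulVec, mul_one, sub_right_inj]
  rw [Finset.sum_comm]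

variable (ι)

def su : Set (Matrix ι ι ℂ) := {M | Mᴴ = -M ∧ M.trace = 0}

def hμ : Set (Matrix ι ι ℂ) := {M | M ∈ su ι ∧ ∃ θ : ℝ, M *ᵥ 1 = ((θ : ℂ) * I) • 1}

def cDiff : Set (Matrix ι ι ℂ) :=
  {M | ∃ u : ι → ℝ, ∑ j, u j = 0 ∧ ∀ j k, M j k = (u j : ℂ) - (u k : ℂ)}

variable {ι}

theorem mem_cDiff_iff {M : Matrix ι ι ℂ} :
    M ∈ cDiff ι ↔ ∃ u, ∑ j, u j = 0 ∧ M = diffMatrix u :=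
  exists_congr fun _ => and_congr_right fun _ =>
    ⟨fun h => ext h, by rintro rfl; exact fun _ _ => rfl⟩

theorem sub_mem_su {M N : Matrix ι ι ℂ} (hM : M ∈ su ι) (hN : N ∈ su ι) : M - N ∈ su ι :=
  ⟨by rw [conjTranspose_sub, hM.1, hN.1, neg_sub_neg, neg_sub], by
    rw [trace_sub, hM.2, hN.2, sub_zero]⟩

theorem cDiff_subset_su : cDiff ι ⊆ su ι := by
  intro M hM
  obtain ⟨u, -, rfl⟩ := mem_cDiff_iff.mp hM
  exact ⟨diffMatrix_conjTranspose u, trace_diffMatrix u⟩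

noncomputable def diffCoeffs (M : Matrix ι ι ℂ) (j : ι) : ℝ :=
  ((M *ᵥ 1) j).re / Fintype.card ι

noncomputable def meanRowSumIm (M : Matrix ι ι ℂ) : ℝ :=
  (∑ j, ((M *ᵥ 1) j).im) / Fintype.card ι

noncomputable def diagCoeffs (M : Matrix ι ι ℂ) (j : ι) : ℝ :=
  ((M *ᵥ 1) j).im - meanRowSumIm M

noncomputable def cPart (M : Matrix ι ι ℂ) : Matrix ι ι ℂ := diffMatrix (diffCoeffs M)

theorem sum_diffCoeffs {M : Matrix ι ι ℂ} (hM : Mᴴ = -M) : ∑ j, diffCoeffs M j = 0 := by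
  simp only [diffCoeffs]
  rw [← Finset.sum_div, sum_re_mulVec_one_eq_zero hM, zero_div]

theorem sum_diagCoeffs (M : Matrix ι ι ℂ) : ∑ j, diagCoeffs M j = 0 := by
  cases isEmpty_or_nonempty ι
  · simp
  · simp only [diagCoeffs, meanRowSumIm, Finset.sum_sub_distrib, Finset.sum_const,
      Finset.card_univ, nsmul_eq_mul]
    rw [mul_div_cancel₀ _ (Nat.cast_ne_zero.mpr Fintype.card_ne_zero), sub_self]

theorem cPart_mem {M : Matrix ι ι ℂ} (hM : Mᴴ = -M) : cPart M ∈ cDiff ι :=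
  ⟨diffCoeffs M, sum_diffCoeffs hM, fun _ _ => rfl⟩

variable [DecidableEq ι]

theorem trace_diffMatrix_mul_diagonal (u : ι → ℝ) (d : ι → ℂ) :
    (diffMatrix u * diagonal d).trace = 0 := by
  simp [diffMatrix, trace, mul_diagonal]

variable (ι) in
def bDiag : Set (Matrix ι ι ℂ) :=
  {M | ∃ d : ι → ℝ, ∑ j, d j = 0 ∧ M = diagonal fun j => (d j : ℂ) * I}

theorem bDiag_subset_su : bDiag ι ⊆ su ι := by
  rintro _ ⟨d, hd, rfl⟩
  refine ⟨by rw [diagonal_conjTranspose, diagonal_neg]; congr 1; ext; simp, ?_⟩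
  simp [trace_diagonal, ← Finset.sum_mul, ← ofReal_sum, hd]

theorem trace_mul_eq_zero_of_mem_cDiff {M A : Matrix ι ι ℂ} (hM : M ∈ cDiff ι)
    (hA : A ∈ hμ ι ∨ A ∈ bDiag ι) : (M * A).trace = 0 := by
  obtain ⟨u, -, rfl⟩ := mem_cDiff_iff.mp hM
  rcases hA with ⟨⟨hA, -⟩, θ, hθ⟩ | ⟨d, -, rfl⟩
  · have hcol : 1 ᵥ* A = ((θ : ℂ) * I) • 1 := by
      rw [one_vecMul_eq_neg_star_mulVec_one hA, hθ]
      ext j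
      simp
    rw [trace_diffMatrix_mul, hcol, hθ, sub_self]
  · exact trace_diffMatrix_mul_diagonal u _

noncomputable def bPart (M : Matrix ι ι ℂ) : Matrix ι ι ℂ :=
  diagonal fun j => (diagCoeffs M j : ℂ) * I

theorem bPart_mem (M : Matrix ι ι ℂ) : bPart M ∈ bDiag ι :=
  ⟨diagCoeffs M, sum_diagCoeffs M, rfl⟩

theorem mulVec_one_sub_bPart_sub_cPart {M : Matrix ι ι ℂ} (hM : Mᴴ = -M) :
    (M - bPart M - cPart M) *ᵥ 1 = ((meanRowSumIm M : ℂ) * I) • 1 := by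
  ext j
  have : Nonempty ι := ⟨j⟩
  have hn : (Fintype.card ι : ℂ) ≠ 0 := Nat.cast_ne_zero.mpr Fintype.card_ne_zero
  simp only [bPart, diagCoeffs, ofReal_sub, cPart, sub_mulVec,
    diffMatrix_mulVec_one (sum_diffCoeffs hM), diffCoeffs, ofReal_div, ofReal_natCast,
    Pi.sub_apply, mulVec_diagonal, Pi.one_apply, mul_one, Pi.smul_apply, smul_eq_mul]
  rw [mul_div_cancel₀ _ hn]
  linear_combination (re_add_im ((M *ᵥ 1) j)).symm

theorem sub_bPart_sub_cPart_mem {M : Matrix ι ι ℂ} (hM : M ∈ su ι) :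
    M - bPart M - cPart M ∈ hμ ι :=
  ⟨sub_mem_su (sub_mem_su hM (bDiag_subset_su (bPart_mem M)))
      (cDiff_subset_su (cPart_mem hM.1)),
    meanRowSumIm M, mulVec_one_sub_bPart_sub_cPart hM.1⟩

theorem bPart_add_add_and_cPart_add_add {H B C : Matrix ι ι ℂ} (hH : H ∈ hμ ι)
    (hB : B ∈ bDiag ι) (hC : C ∈ cDiff ι) :
    bPart (H + B + C) = B ∧ cPart (H + B + C) = C := by
  obtain ⟨-, θ, hθ⟩ := hH
  obtain ⟨d, hd, rfl⟩ := hB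
  obtain ⟨u, hu, rfl⟩ := mem_cDiff_iff.mp hC
  set M := H + diagonal (fun j => (d j : ℂ) * I) + diffMatrix u
  have hrow (j : ι) : (M *ᵥ 1) j = (Fintype.card ι : ℂ) * u j + ((θ + d j : ℝ) : ℂ) * I := by
    simp only [M, add_mulVec, hθ, diffMatrix_mulVec_one hu, mulVec_diagonal, Pi.add_apply,
      Pi.smul_apply, Pi.one_apply, smul_eq_mul, mul_one, ofReal_add]
    ring
  have hre (j : ι) : ((M *ᵥ 1) j).re = Fintype.card ι * u j := by simp [hrow]
  have him (j : ι) : ((M *ᵥ 1) j).im = θ + d j := by simp [hrow]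
  have hn (j : ι) : (Fintype.card ι : ℝ) ≠ 0 :=
    Nat.cast_ne_zero.mpr (Fintype.card_pos_iff.mpr ⟨j⟩).ne'
  have hmean (j : ι) : meanRowSumIm M = θ := by
    simp only [meanRowSumIm, him, Finset.sum_add_distrib, hd, Finset.sum_const,
      Finset.card_univ, nsmul_eq_mul, add_zero]
    exact mul_div_cancel_left₀ θ (hn j)
  constructor
  · exact congrArg diagonal (funext fun j => by
      rw [diagCoeffs, him, hmean j, add_sub_cancel_left])
  · exact congrArg diffMatrix (funext fun j => by
      rw [diffCoeffs, hre, mul_div_cancel_left₀ _ (hn j)])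

theorem existsUnique_add_add_mem {M : Matrix ι ι ℂ} (hM : M ∈ su ι) :
    ∃! t : Matrix ι ι ℂ × Matrix ι ι ℂ × Matrix ι ι ℂ,
      t.1 ∈ hμ ι ∧ t.2.1 ∈ bDiag ι ∧ t.2.2 ∈ cDiff ι ∧ M = t.1 + t.2.1 + t.2.2 := by
  refine ⟨(M - bPart M - cPart M, bPart M, cPart M),
    ⟨sub_bPart_sub_cPart_mem hM, bPart_mem M, cPart_mem hM.1, by dsimp only; abel⟩, ?_⟩
  rintro ⟨H, B, C⟩ ⟨hH, hB, hC, rfl⟩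
  obtain ⟨hb, hc⟩ := bPart_add_add_and_cPart_add_add hH hB hC
  simp only [hb, hc, Prod.mk.injEq, and_true]
  abel

theorem forall_trace_mul_eq_zero_iff_mem_cDiff {M : Matrix ι ι ℂ} (hM : M ∈ su ι) :
    (∀ A, A ∈ hμ ι ∨ A ∈ bDiag ι → (M * A).trace = 0) ↔ M ∈ cDiff ι := by
  refine ⟨fun h => ?_, fun hc A hA => trace_mul_eq_zero_of_mem_cDiff hc hA⟩
  have hHμ := sub_bPart_sub_cPart_mem hM
  have hC := cPart_mem hM.1
  set X := M - cPart M with hX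
  have hXsplit : X = (M - bPart M - cPart M) + bPart M := by rw [hX]; abel
  have hXX : (X * X).trace = 0 := by
    have hMX : (M * X).trace = 0 := by
      rw [hXsplit, mul_add, trace_add, h _ (.inl hHμ), h _ (.inr (bPart_mem M)), add_zero]
    have hCX : (cPart M * X).trace = 0 := by
      rw [hXsplit, mul_add, trace_add, trace_mul_eq_zero_of_mem_cDiff hC (.inl hHμ),
        trace_mul_eq_zero_of_mem_cDiff hC (.inr (bPart_mem M)), add_zero]
    rw [hX, sub_mul, trace_sub, ← hX, hMX, hCX, sub_zero]
  have hXsu : X ∈ su ι := sub_mem_su hM (cDiff_subset_su hC)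
  have hX0 : X = 0 := (trace_mul_self_eq_zero_iff_of_conjTranspose_eq_neg hXsu.1).mp hXX
  rwa [sub_eq_zero.mp hX0]

end SuDecomposition

open SuDecomposition

/-- With `v` the all-ones vector, `su(n)` decomposes as the
direct sum `h_μ ⊕ b ⊕ c`, where `h_μ = {M ∈ su(n) : Mv = iθv}`,
`b` = purely imaginary traceless diagonal matrices, and
`c` = antihermitian matrices with entries `u_j - u_k` (`u` real, `Σ u_j = 0`);
moreover `c` is the orthogonal complement of `h_μ ⊕ b` in `su(n)` with respect
to the Killing form `(X, Y) ↦ Tr(XY)`. -/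
theorem su_n_decomposition
    {n : ℕ} (v : Fin n → ℂ) (hv : ∀ j, v j = 1) :
    -- membership predicates
    ∀ inSU inHμ inB inC : Matrix (Fin n) (Fin n) ℂ → Prop,
    (∀ M, inSU M ↔ (Mᴴ = -M ∧ M.trace = 0)) →
    (∀ M, inHμ M ↔ (inSU M ∧ ∃ θ : ℝ, M *ᵥ v = ((θ : ℂ) * Complex.I) • v)) →
    (∀ M, inB M ↔ (∃ d : Fin n → ℝ, (∑ j, d j = 0) ∧
        M = Matrix.diagonal (fun j => (d j : ℂ) * Complex.I))) →
    (∀ M, inC M ↔ (∃ u : Fin n → ℝ, (∑ j, u j = 0) ∧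
        ∀ j k, M j k = (u j : ℂ) - (u k : ℂ))) →
    -- direct sum decomposition: existence and uniqueness
    ((∀ M, inSU M →
        ∃! t : Matrix (Fin n) (Fin n) ℂ × Matrix (Fin n) (Fin n) ℂ ×
            Matrix (Fin n) (Fin n) ℂ,
          inHμ t.1 ∧ inB t.2.1 ∧ inC t.2.2 ∧ M = t.1 + t.2.1 + t.2.2) ∧
    -- `c` is the orthogonal complement of `h_μ ⊕ b` in `su(n)`
      (∀ M, inSU M →
        ((∀ A, inHμ A ∨ inB A → (M * A).trace = 0) ↔ inC M))) := by
  intro inSU inHμ inB inC hSU hHμ hB hC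
  obtain rfl : v = 1 := funext hv
  obtain rfl : inSU = (· ∈ su (Fin n)) := funext fun M => propext (hSU M)
  obtain rfl : inHμ = (· ∈ hμ (Fin n)) := funext fun M => propext (hHμ M)
  obtain rfl : inB = (· ∈ bDiag (Fin n)) := funext fun M => propext (hB M)
  obtain rfl : inC = (· ∈ cDiff (Fin n)) := funext fun M => propext (hC M)
  exact ⟨fun _ => existsUnique_add_add_mem, fun _ => forall_trace_mul_eq_zero_iff_mem_cDiff⟩
end
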